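/- arXiv:1106.0952 — 3 statements merged into one kernel-verified Lean document; each statement's English description precedes it below -/
import Mathlib

section
/- Fix an integer r ≥ 2 and n ≥ 4. If m ≥ n−1, then there do not exist integers i and w with 0 ≤ i < c_{n−2} and 1 ≤ w < r−1 such that the set {t : i < t ≤ c_{n−2}, s_{i,t} > s} is nonempty and its minimum equals i + c_m − w·c_{m−1}. In particular, the set T^{≥ n−1}(D_n) is empty. -/
open scoped Classical

namespace CF

noncomputable section

/-- The sequence `c` : `c 1 = 0`, `c 2 = 1`, `c n = r * c (n-1) - c (n-2)`.
(The value `c 0 = -1` is the unique value consistent with the recurrence.) -/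
def c (r : ℕ) : ℕ → ℤ
  | 0 => -1
  | 1 => 0
  | n + 2 => (r : ℤ) * c r (n + 1) - c r n

/-- `c` as a natural number (valid for indices `≥ 1` when `r ≥ 2`). -/
def cN (r n : ℕ) : ℕ := (c r n).toNat

/-- Height (y-coordinate) of the vertex `w_k` of the maximal Dyck path `D_n`:
the maximal Dyck path from `(0,0)` to `(c_{n-1}-c_{n-2}, c_{n-2})` weakly below the
diagonal has `w_k = (k - ⌊k·c_{n-2}/c_{n-1}⌋, ⌊k·c_{n-2}/c_{n-1}⌋)`. -/
def hgt (r n k : ℕ) : ℕ := k * cN r (n - 2) / cN r (n - 1)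

/-- The edge `α_j` of `D_n` is vertical (a north step). -/
def isVert (r n j : ℕ) : Prop := hgt r n (j - 1) < hgt r n j

/-- Index in the vertex sequence `w_0, …, w_{c_{n-1}}` of the vertex `v_j`
(the upper endpoint of the `j`-th vertical edge); `vpos r n 0 = 0`. -/
def vpos (r n j : ℕ) : ℕ := (j * cN r (n - 1) + cN r (n - 2) - 1) / cN r (n - 2)

/-- x-coordinate of the vertex `v_j` of `D_n` (its y-coordinate is `j`). -/
def vx (r n j : ℕ) : ℤ := (vpos r n j : ℤ) - (j : ℤ)

/-- The slope `s_{i,t}` between `v_i` and `v_t` is at most the slope `s` of the diagonal,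
expressed by cross-multiplication. -/
def slopeLE (r n i t : ℕ) : Prop :=
  ((t : ℤ) - (i : ℤ)) * (c r (n - 1) - c r (n - 2)) ≤ (vx r n t - vx r n i) * c r (n - 2)

/-- `{t | i < t ≤ k, s_{i,t} > s}`. -/
def badSet (r n i k : ℕ) : Finset ℕ :=
  (Finset.Icc (i + 1) k).filter fun t => ¬ slopeLE r n i t

/-- `α(i,k)` is blue: `s_{i,t} ≤ s` for all `i < t ≤ k`. -/
def isBlue (r n i k : ℕ) : Prop := badSet r n i k = ∅

/-- `t₀` is the minimum of `{t | i < t ≤ k, s_{i,t} > s}`. -/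
def minBad (r n i k t₀ : ℕ) : Prop :=
  t₀ ∈ badSet r n i k ∧ ∀ t ∈ badSet r n i k, t₀ ≤ t

/-- `α(i,k)` is `(m,w)`-green: the minimum `t₀` of `{t | i < t ≤ k, s_{i,t} > s}` exists and
equals `i + c_m - w·c_{m-1}`, with `3 ≤ m ≤ n-2` and `1 ≤ w < r-1`. -/
def isGreenMW (r n i k m w : ℕ) : Prop :=
  3 ≤ m ∧ m + 2 ≤ n ∧ 1 ≤ w ∧ (w : ℤ) < (r : ℤ) - 1 ∧
    ∃ t₀ : ℕ, minBad r n i k t₀ ∧ (t₀ : ℤ) = (i : ℤ) + (c r m - (w : ℤ) * c r (m - 1))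

def isGreen (r n i k : ℕ) : Prop := ∃ m w, isGreenMW r n i k m w

/-- `α(i,k)` is red: neither blue nor green. -/
def isRed (r n i k : ℕ) : Prop := ¬ isBlue r n i k ∧ ¬ isGreen r n i k

/-- An element of `P(D_n)`: either a single edge `α_j` (`Sum.inl j`) or a subpath
`α(i,k)` (`Sum.inr (i,k)`). -/
abbrev Elt := ℕ ⊕ ℕ × ℕ

/-- The set of (indices of) edges of `D_n` constituting an element of `P(D_n)`:
a single edge; for `α(i,k)`, the edges from `v_i` (or from its immediate predecessor,
in the red case) to `v_k`. -/
def edges (r n : ℕ) : Elt → Finset ℕ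
  | Sum.inl j => {j}
  | Sum.inr (i, k) =>
      if isRed r n i k then Finset.Icc (vpos r n i) (vpos r n k)
      else Finset.Icc (vpos r n i + 1) (vpos r n k)

/-- Validity of an element of `P(D_n)`: `1 ≤ j ≤ c_{n-1}` for a single edge,
`0 ≤ i < k ≤ c_{n-2}` for a subpath `α(i,k)`. -/
def validElt (r n : ℕ) : Elt → Prop
  | Sum.inl j => 1 ≤ j ∧ (j : ℤ) ≤ c r (n - 1)
  | Sum.inr (i, k) => i < k ∧ (k : ℤ) ≤ c r (n - 2)

/-- The common conditions on a collection `β = {β_1,…,β_t}` of elements of `P(D_n)`: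
all elements are valid, distinct elements share no edge, and for any two subpaths
`α(i,k)`, `α(i',k')` one has `i ≠ k'` and `i' ≠ k`. -/
def validColl (r n : ℕ) (β : Finset Elt) : Prop :=
  (∀ p ∈ β, validElt r n p) ∧
  (∀ p ∈ β, ∀ q ∈ β, p ≠ q → Disjoint (edges r n p) (edges r n q)) ∧
  (∀ i k i' k' : ℕ, Sum.inr (i, k) ∈ β → Sum.inr (i', k') ∈ β → i ≠ k' ∧ i' ≠ k)

/-- The `c_{m-1} - w·c_{m-2}` edges of `D_n` immediately preceding the vertex `v_i`. -/
def precEdges (r n i m w : ℕ) : Finset ℕ :=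
  Finset.Icc (vpos r n i + 1 - (c r (m - 1) - (w : ℤ) * c r (m - 2)).toNat) (vpos r n i)

/-- The set `F(D_n)`. -/
def FD (r n : ℕ) : Set (Finset Elt) :=
  {β | validColl r n β ∧
    ∀ i k m w : ℕ, Sum.inr (i, k) ∈ β → isGreenMW r n i k m w →
      ∃ e ∈ precEdges r n i m w, ∃ p ∈ β, e ∈ edges r n p}

/-- The set `F̃(D_n)`. -/
def Ftilde (r n : ℕ) : Set (Finset Elt) := {β | validColl r n β}

/-- The set `T^{≥u}(D_n)`. -/
def Tge (r n u : ℕ) : Set (Finset Elt) :=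
  {β | validColl r n β ∧ β.Nonempty ∧
    ∃ i k m w : ℕ, u ≤ m ∧ Sum.inr (i, k) ∈ β ∧ isGreenMW r n i k m w ∧
      ∀ e ∈ precEdges r n i m w, ∀ p ∈ β, e ∉ edges r n p}

/-- `|β_j|_1` for a single element. -/
def wt1 : Elt → ℕ
  | Sum.inl _ => 0
  | Sum.inr (i, k) => k - i

/-- `|β|_1`. -/
def B1 (β : Finset Elt) : ℕ := ∑ p ∈ β, wt1 p

/-- `|β|_2`: the total number of edges in the collection `β`. -/
def B2 (r n : ℕ) (β : Finset Elt) : ℕ := (β.biUnion (edges r n)).card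

/-- The field `ℚ(x₁,x₂)`. -/
abbrev K := FractionRing (MvPolynomial (Fin 2) ℚ)

/-- The indeterminate `x₁`. -/
def x₁ : K := algebraMap (MvPolynomial (Fin 2) ℚ) K (MvPolynomial.X 0)

/-- The indeterminate `x₂`. -/
def x₂ : K := algebraMap (MvPolynomial (Fin 2) ℚ) K (MvPolynomial.X 1)

/-- `b_{n-1,k}`: `r` if the edge `α_k` of `D_n` is horizontal, `r-1` if vertical. -/
def bseq (r n k : ℕ) : ℕ := if isVert r n k then r - 1 else r

/-- Prefix sums `S e = Σ_{k=1}^{e} b_{n-1,k}`. -/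
def S (r n e : ℕ) : ℕ := ∑ k ∈ Finset.Icc 1 e, bseq r n k

/-- The interval `[a,b] ⊆ [1,c_n]` is (the edge set of) a blue or green subpath of `D_{n+1}`. -/
def isBGinterval (r n a b : ℕ) : Prop :=
  ∃ i k : ℕ, i < k ∧ (k : ℤ) ≤ c r (n - 1) ∧ ¬ isRed r (n + 1) i k ∧
    Finset.Icc a b = Finset.Icc (vpos r (n + 1) i + 1) (vpos r (n + 1) k)

/-- Left endpoints of the maximal interval components of `V`. -/
def starts (V : Finset ℕ) : Finset ℕ := V.filter fun e => e - 1 ∉ V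

/-- Right endpoint of the maximal interval component of `V` starting at `e`. -/
def compEnd (V : Finset ℕ) (e : ℕ) : ℕ := sSup {g : ℕ | Finset.Icc e g ⊆ V}

/-- `f_i(V)`: the image of the maximal interval component of `V` starting at `e`. -/
def fcomp (r n : ℕ) (V : Finset ℕ) (e : ℕ) : Finset ℕ :=
  if isBGinterval r n (S r n (e - 1) + 1) (S r n (compEnd V e)) then
    Finset.Icc (S r n (e - 1) + 1) (S r n (compEnd V e))
  else
    insert (S r n (e - 1)) (Finset.Icc (S r n (e - 1) + 1) (S r n (compEnd V e)))

/-- The map `f` from subsets of `[1,c_{n-1}]` to subsets of `[1,c_n]`. -/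
def fmap (r n : ℕ) (V : Finset ℕ) : Finset ℕ := (starts V).biUnion (fcomp r n V)

/-- The pull-back `f*` (of the map `f` one level down, from subsets of `[1,c_{n-2}]`
to subsets of `[1,c_{n-1}]`). -/
def fstar (r n : ℕ) (W : Finset ℕ) : Finset ℕ :=
  ((Finset.Icc 1 (cN r (n - 2))).powerset.filter fun U => fmap r (n - 1) U ⊆ W).biUnion id

/-- `δ` of a maximal interval component `[e,g]`: `1` if the `w`-th edge of the corresponding
subpath of `D_n` is vertical for some `2 ≤ w ≤ r-1`, and `0` otherwise. -/
def deltaComp (r n e g : ℕ) : ℕ :=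
  if ∃ w : ℕ, 2 ≤ w ∧ w ≤ r - 1 ∧ e + w - 1 ≤ g ∧ isVert r n (e + w - 1) then 1 else 0

/-- `δ_V`. -/
def deltaV (r n : ℕ) (V : Finset ℕ) : ℕ :=
  ∑ e ∈ starts V, deltaComp r n e (compEnd V e)

/-- Generalized binomial coefficient for integers `A`, `B`. -/
def gbinom (A B : ℤ) : ℚ :=
  if B < 0 then 0
  else (∏ i ∈ Finset.range B.toNat, ((A : ℚ) - (i : ℚ))) / (B.toNat.factorial : ℚ)

/-- `z_n` for `n ≥ 4`, given by the sum over `F̃(D_n)`. -/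
def zF (r n : ℕ) : K :=
  x₁ ^ (-(c r (n - 1))) * x₂ ^ (-(c r (n - 2))) *
    ∑ᶠ β ∈ Ftilde r n,
      x₁ ^ ((r : ℤ) * (B1 β : ℤ)) * x₂ ^ ((r : ℤ) * (c r (n - 1) - (B2 r n β : ℤ)))

/-- `z_n`, with `z_3 = x_3` (the value `x3` is the cluster variable `x_3`). -/
def z (r : ℕ) (x3 : K) (n : ℕ) : K := if n = 3 then x3 else zF r n

end

lemma c_lt_c_succ {r : ℕ} (hr : 2 ≤ r) (k : ℕ) : c r k < c r (k + 1) ∧ 0 ≤ c r (k + 1) := by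
  induction k with
  | zero => simp [c]
  | succ k ih =>
    have hrec : c r (k + 2) = r * c r (k + 1) - c r k := rfl
    have hr' : (2 : ℤ) ≤ r := by exact_mod_cast hr
    obtain ⟨hlt, hnonneg⟩ := ih
    constructor <;> nlinarith

lemma c_strictMono {r : ℕ} (hr : 2 ≤ r) : StrictMono (c r) :=
  strictMono_nat_of_lt_succ fun k => (c_lt_c_succ hr k).1

lemma c_pred_lt_c_sub_mul {r m w : ℕ} (hw : w + 2 ≤ r) (hm : 2 ≤ m) :
    c r (m - 1) < c r m - w * c r (m - 1) := by
  obtain ⟨k, rfl⟩ : ∃ k, m = k + 2 := ⟨m - 2, by omega⟩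
  obtain ⟨hlt, hnonneg⟩ := c_lt_c_succ (by omega : 2 ≤ r) k
  have hrec : c r (k + 2) = r * c r (k + 1) - c r k := rfl
  have hw' : (w : ℤ) + 2 ≤ r := by exact_mod_cast hw
  simp only [show k + 2 - 1 = k + 1 by omega]
  nlinarith

lemma minBad_le {r n i k t₀ : ℕ} (h : minBad r n i k t₀) : t₀ ≤ k := by
  obtain ⟨hmem, -⟩ := h
  simp only [badSet, Finset.mem_filter, Finset.mem_Icc] at hmem
  exact hmem.1.2

/-- Since `c` is increasing, `c_m - w c_{m-1} > c_{m-1} ≥ c_{n-2}`: the candidate minimum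
overshoots the last vertex `v_{c_{n-2}}`. -/
lemma c_lt_add_c_sub_mul {r n m i w : ℕ} (hm : n - 1 ≤ m) (hi : (i : ℤ) < c r (n - 2))
    (hw : w + 2 ≤ r) : c r (n - 2) < i + (c r m - w * c r (m - 1)) := by
  have hmono := c_strictMono (by omega : 2 ≤ r)
  have hn : 1 < n - 2 := hmono.lt_iff_lt.mp (by rw [show c r 1 = 0 from rfl]; omega)
  have hle : c r (n - 2) ≤ c r (m - 1) := hmono.monotone (by omega)
  have := c_pred_lt_c_sub_mul (m := m) hw (by omega)
  omega

lemma Tge_eq_empty {r n u : ℕ} (hu : n < u + 2) : Tge r n u = ∅ := by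
  rw [Set.eq_empty_iff_forall_notMem]
  rintro β ⟨-, -, i, k, m, w, hum, -, ⟨-, hmn, -⟩, -⟩
  omega

theorem no_high_green_general (r : ℕ) (n : ℕ)
    (m : ℕ) (hm : n - 1 ≤ m) :
    (¬ ∃ i w t₀ : ℕ, (i : ℤ) < c r (n - 2) ∧ 1 ≤ w ∧ (w : ℤ) < (r : ℤ) - 1 ∧
        minBad r n i (cN r (n - 2)) t₀ ∧
        (t₀ : ℤ) = (i : ℤ) + (c r m - (w : ℤ) * c r (m - 1))) ∧
      Tge r n (n - 1) = ∅ := by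
  refine ⟨?_, Tge_eq_empty (by omega)⟩
  rintro ⟨i, w, t₀, hi, -, hw, hmin, ht₀⟩
  have hcN : (cN r (n - 2) : ℤ) = c r (n - 2) := Int.toNat_of_nonneg (by omega)
  have hle : (t₀ : ℤ) ≤ c r (n - 2) := hcN ▸ Int.ofNat_le.mpr (minBad_le hmin)
  have := c_lt_add_c_sub_mul hm hi (by omega : w + 2 ≤ r)
  omega

theorem no_high_green (r : ℕ) (hr : 2 ≤ r) (n : ℕ) (hn : 4 ≤ n)
    (m : ℕ) (hm : n - 1 ≤ m) :
    (¬ ∃ i w t₀ : ℕ, (i : ℤ) < c r (n - 2) ∧ 1 ≤ w ∧ (w : ℤ) < (r : ℤ) - 1 ∧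
        minBad r n i (cN r (n - 2)) t₀ ∧
        (t₀ : ℤ) = (i : ℤ) + (c r m - (w : ℤ) * c r (m - 1))) ∧
      Tge r n (n - 1) = ∅ :=
  no_high_green_general r n m hm

end CF
end

section
/- Fix an integer r ≥ 2 and n ≥ 5, and let w be an integer with 1 ≤ w ≤ r−2. Then the lattice point (w·(c_{n−2}−c_{n−3}), w·c_{n−3}) lies weakly below the diagonal from (0,0) to (c_{n−1}−c_{n−2}, c_{n−2}), while the points (w·(c_{n−2}−c_{n−3}), 1 + w·c_{n−3}) and (w·(c_{n−2}−c_{n−3}) − 1, w·c_{n−3}) lie strictly above it; explicitly: w·c_{n−3}·(c_{n−1}−c_{n−2}) ≤ w·(c_{n−2}−c_{n−3})·c_{n−2}, (1 + w·c_{n−3})·(c_{n−1}−c_{n−2}) > w·(c_{n−2}−c_{n−3})·c_{n−2}, and w·c_{n−3}·(c_{n−1}−c_{n−2}) > (w·(c_{n−2}−c_{n−3}) − 1)·c_{n−2}. -/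
open scoped Classical

namespace CF

lemma c_step (r : ℕ) (hr : 2 ≤ r) : ∀ m, 1 ≤ m → 0 ≤ c r m ∧ c r m + 1 ≤ c r (m + 1) := by
  intro m hm
  induction m with
  | zero => omega
  | succ k ih =>
    rcases Nat.eq_or_lt_of_le hm with h | h
    · obtain rfl : k = 0 := by omega
      norm_num [c]
    · have hk : 1 ≤ k := by omega
      obtain ⟨h0, h1⟩ := ih hk
      have hr' : (2 : ℤ) ≤ (r : ℤ) := by exact_mod_cast hr
      have hc : c r (k + 2) = (r : ℤ) * c r (k + 1) - c r k := rfl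
      constructor
      · linarith
      · rw [hc]; nlinarith

lemma c_ident (r : ℕ) : ∀ k, c r (k + 2) * c r k = c r (k + 1) ^ 2 - 1 := by
  intro k
  induction k with
  | zero => simp [c]
  | succ m ih =>
    have h1 : c r (m + 3) = (r : ℤ) * c r (m + 2) - c r (m + 1) := rfl
    have h2 : c r (m + 2) = (r : ℤ) * c r (m + 1) - c r m := rfl
    show c r (m + 3) * c r (m + 1) = c r (m + 2) ^ 2 - 1
    rw [h2] at ih
    rw [h1, h2]
    linear_combination ih

lemma c_ge_r (r : ℕ) (hr : 2 ≤ r) : ∀ m, 3 ≤ m → (r : ℤ) ≤ c r m := by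
  intro m hm
  induction m with
  | zero => omega
  | succ k ih =>
    rcases Nat.eq_or_lt_of_le hm with h | h
    · have : c r 3 = (r : ℤ) * 1 - 0 := rfl
      simp [← h]; omega
    · have hk : 3 ≤ k := by omega
      have := (c_step r hr k (by omega)).2
      linarith [ih hk]

theorem lattice_point_position (r : ℕ) (hr : 2 ≤ r) (n : ℕ) (hn : 5 ≤ n)
    (w : ℕ) (hw1 : 1 ≤ w) (hw2 : (w : ℤ) ≤ (r : ℤ) - 2) :
    (w : ℤ) * c r (n - 3) * (c r (n - 1) - c r (n - 2)) ≤
        (w : ℤ) * (c r (n - 2) - c r (n - 3)) * c r (n - 2) ∧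
      (1 + (w : ℤ) * c r (n - 3)) * (c r (n - 1) - c r (n - 2)) >
        (w : ℤ) * (c r (n - 2) - c r (n - 3)) * c r (n - 2) ∧
      (w : ℤ) * c r (n - 3) * (c r (n - 1) - c r (n - 2)) >
        ((w : ℤ) * (c r (n - 2) - c r (n - 3)) - 1) * c r (n - 2) := by
  obtain ⟨k, rfl⟩ : ∃ k, n = k + 3 := ⟨n - 3, by omega⟩
  have e3 : k + 3 - 3 = k := by omega
  have e2 : k + 3 - 2 = k + 1 := by omega
  have e1 : k + 3 - 1 = k + 2 := by omega
  rw [e1, e2, e3]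
  have hk : 2 ≤ k := by omega
  have hid := c_ident r k
  have ha := (c_step r hr k (by omega)).1
  have hab := (c_step r hr k (by omega)).2
  have hb := c_ge_r r hr (k + 1) (by omega)
  have hc : c r (k + 2) = (r : ℤ) * c r (k + 1) - c r k := rfl
  have hw0 : (1 : ℤ) ≤ (w : ℤ) := by exact_mod_cast hw1
  have hr' : (2 : ℤ) ≤ (r : ℤ) := by exact_mod_cast hr
  refine ⟨by nlinarith, by nlinarith, by nlinarith⟩

end CF
end

section
/- Fix an integer r ≥ 2 and n ≥ 4. Then z_{n+1} = x_1^{−c_n} · x_2^{−c_{n−1}} · Σ_{V ⊆ [1, c_{n−1}]} Σ_{h ∈ ℤ} C(c_n − |f(V)|, h) · x_1^{r·|V|} · x_2^{r·(c_n − |f(V)| − h)}, where for integers A, B the generalized binomial coefficient C(A,B) equals (Π_{i=0}^{B−1}(A−i))/B! if B > 0, equals 1 if B = 0, and equals 0 if B < 0. -/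
open scoped Classical

namespace CF

/-!
A collection `β ∈ F̃(D_{n+1})` consists of single edges and subpaths `α(i,k)`. The subpaths are
pairwise edge-disjoint and never share an endpoint index, so the intervals `(i,k]` are exactly the
maximal interval components of `V = ⋃ (i,k] ⊆ [1, c_{n-1}]`. Since the prefix sums
`Σ_{k ≤ j} b_{n-1,k} = ⌈j c_n / c_{n-1}⌉` are the positions of the vertices `v_j` on `D_{n+1}`,
the edge set of `α(i,k)` is the `f`-image of its component; hence `β ↦ (V, E)`, with `E` the set of
single edges, is a bijection onto the pairs with `E ⊆ [1, c_n] \ f(V)`, and `|β|_1 = |V|`,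
`|β|_2 = |f(V)| + |E|`. Grouping the subsets `E` by size produces the binomial coefficients.
-/

open Finset

section Sequence

variable {r : ℕ}

lemma c_succ_nonneg_and_le (hr : 2 ≤ r) : ∀ k, 0 ≤ c r (k + 1) ∧ c r (k + 1) ≤ c r (k + 2)
  | 0 => by simp [c]
  | k + 1 => by
    obtain ⟨h0, hle⟩ := c_succ_nonneg_and_le hr k
    have hrec : c r (k + 3) = r * c r (k + 2) - c r (k + 1) := rfl
    have hr' : (2 : ℤ) ≤ r := by exact_mod_cast hr
    constructor <;> nlinarith

lemma c_nonneg (hr : 2 ≤ r) {k : ℕ} (hk : 1 ≤ k) : 0 ≤ c r k := by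
  obtain ⟨k, rfl⟩ := Nat.exists_eq_add_of_le' hk
  exact (c_succ_nonneg_and_le hr k).1

lemma one_le_c (hr : 2 ≤ r) {k : ℕ} (hk : 2 ≤ k) : 1 ≤ c r k := by
  induction k, hk using Nat.le_induction with
  | base => simp [c]
  | succ k hk ih =>
    obtain ⟨k, rfl⟩ := Nat.exists_eq_add_of_le' (by omega : 1 ≤ k)
    exact ih.trans (c_succ_nonneg_and_le hr k).2

lemma cN_cast (hr : 2 ≤ r) {k : ℕ} (hk : 1 ≤ k) : (cN r k : ℤ) = c r k :=
  Int.toNat_of_nonneg (c_nonneg hr hk)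

variable {n : ℕ}

lemma cN_pred_pos (hr : 2 ≤ r) (hn : 3 ≤ n) : 0 < cN r (n - 1) := by
  have := one_le_c hr (k := n - 1) (by omega)
  have := cN_cast hr (k := n - 1) (by omega)
  omega

lemma cN_sub_two_le (hr : 2 ≤ r) (hn : 3 ≤ n) : cN r (n - 2) ≤ cN r (n - 1) := by
  obtain ⟨k, rfl⟩ := Nat.exists_eq_add_of_le' hn
  have := (c_succ_nonneg_and_le hr k).2
  have := cN_cast hr (k := k + 1) (by omega)
  have := cN_cast hr (k := k + 2) (by omega)
  simp only [show k + 3 - 2 = k + 1 by omega, show k + 3 - 1 = k + 2 by omega]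
  omega

lemma cN_add_cN_sub_two (hr : 2 ≤ r) (hn : 3 ≤ n) :
    cN r n + cN r (n - 2) = r * cN r (n - 1) := by
  obtain ⟨k, rfl⟩ := Nat.exists_eq_add_of_le' hn
  have hrec : c r (k + 3) = r * c r (k + 2) - c r (k + 1) := rfl
  simp only [show k + 3 - 2 = k + 1 by omega, show k + 3 - 1 = k + 2 by omega]
  zify
  rw [cN_cast hr (k := k + 1) (by omega), cN_cast hr (k := k + 2) (by omega),
    cN_cast hr (k := k + 3) (by omega), hrec]
  ring

end Sequence

-- `⌈(q b - a) / b⌉ + ⌊a / b⌋ = q`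
lemma sub_add_pred_div_add_div {a b q : ℕ} (hb : 0 < b) (ha : a ≤ q * b) :
    (q * b - a + (b - 1)) / b + a / b = q := by
  obtain ⟨d, s, hs, rfl⟩ : ∃ d s, s < b ∧ a = d * b + s :=
    ⟨a / b, a % b, Nat.mod_lt a hb, (Nat.div_add_mod' a b).symm⟩
  have hd : d ≤ q := Nat.le_of_mul_le_mul_right (by omega) hb
  have hsplit : q * b - (d * b + s) + (b - 1) = (b - 1 - s) + (q - d) * b := by
    rw [Nat.sub_mul]; have := Nat.mul_le_mul_right b hd; omega
  have hdiv : (d * b + s) / b = d := by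
    rw [Nat.add_comm, Nat.add_mul_div_right _ _ hb, Nat.div_eq_of_lt hs, zero_add]
  rw [hsplit, Nat.add_mul_div_right _ _ hb, Nat.div_eq_of_lt (by omega), hdiv]
  omega

section DyckPath

variable {r n : ℕ}

lemma hgt_mono : Monotone (hgt r n) := fun _ _ h => Nat.div_le_div_right (Nat.mul_le_mul_right _ h)

lemma hgt_succ_le (hr : 2 ≤ r) (hn : 3 ≤ n) (k : ℕ) : hgt r n (k + 1) ≤ hgt r n k + 1 := by
  calc hgt r n (k + 1) ≤ (k * cN r (n - 2) + cN r (n - 1)) / cN r (n - 1) :=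
        Nat.div_le_div_right (by rw [add_mul, one_mul]; gcongr; exact cN_sub_two_le hr hn)
    _ = hgt r n k + 1 := Nat.add_div_right _ (cN_pred_pos hr hn)

lemma S_add_hgt (hr : 2 ≤ r) (hn : 3 ≤ n) (j : ℕ) : S r n j + hgt r n j = r * j := by
  induction j with
  | zero => simp [S, hgt]
  | succ j ih =>
    have hS : S r n (j + 1) = S r n j + bseq r n (j + 1) := sum_Icc_succ_top (by omega) _
    have := hgt_succ_le hr hn j
    have := hgt_mono (r := r) (n := n) (by omega : j ≤ j + 1)
    rw [hS, bseq, isVert, Nat.add_sub_cancel, Nat.mul_succ]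
    split_ifs <;> omega

lemma vpos_add_hgt (hr : 2 ≤ r) (hn : 3 ≤ n) (j : ℕ) :
    vpos r (n + 1) j + hgt r n j = r * j := by
  have hrec : j * cN r n + j * cN r (n - 2) = r * j * cN r (n - 1) := by
    rw [← mul_add, cN_add_cN_sub_two hr hn]; ring
  have hb := cN_pred_pos hr hn
  simp only [vpos, hgt, Nat.add_sub_cancel, show n + 1 - 2 = n - 1 by omega]
  rw [Nat.eq_sub_of_add_eq hrec, Nat.add_sub_assoc hb]
  exact sub_add_pred_div_add_div hb (hrec ▸ Nat.le_add_left _ _)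

lemma S_eq_vpos (hr : 2 ≤ r) (hn : 3 ≤ n) (j : ℕ) : S r n j = vpos r (n + 1) j := by
  have := S_add_hgt hr hn j
  have := vpos_add_hgt hr hn j
  omega

lemma vpos_zero (hr : 2 ≤ r) (hn : 3 ≤ n) : vpos r (n + 1) 0 = 0 := by
  have := vpos_add_hgt hr hn 0
  omega

lemma vpos_strictMono (hr : 2 ≤ r) (hn : 3 ≤ n) : StrictMono (vpos r (n + 1)) :=
  strictMono_nat_of_lt_succ fun j => by
    have := vpos_add_hgt hr hn j
    have := vpos_add_hgt hr hn (j + 1)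
    have := hgt_succ_le hr hn j
    rw [Nat.mul_succ] at *
    omega

lemma vpos_cN_pred (hr : 2 ≤ r) (hn : 3 ≤ n) : vpos r (n + 1) (cN r (n - 1)) = cN r n := by
  have hgt_top : hgt r n (cN r (n - 1)) = cN r (n - 2) :=
    Nat.mul_div_cancel_left _ (cN_pred_pos hr hn)
  have := vpos_add_hgt hr hn (cN r (n - 1))
  have := cN_add_cN_sub_two hr hn
  omega

lemma vpos_le_cN (hr : 2 ≤ r) (hn : 3 ≤ n) {k : ℕ} (hk : k ≤ cN r (n - 1)) :
    vpos r (n + 1) k ≤ cN r n :=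
  vpos_cN_pred hr hn ▸ (vpos_strictMono hr hn).monotone hk

lemma mul_cN_le_vpos_mul (hr : 2 ≤ r) (hn : 3 ≤ n) (j : ℕ) :
    j * cN r n ≤ vpos r (n + 1) j * cN r (n - 1) := by
  have := Nat.lt_div_mul_add (a := j * cN r n + cN r (n - 1) - 1) (cN_pred_pos hr hn)
  simp only [vpos, Nat.add_sub_cancel, show n + 1 - 2 = n - 1 by omega]
  omega

lemma isBlue_zero (hr : 2 ≤ r) (hn : 3 ≤ n) (k : ℕ) : isBlue r (n + 1) 0 k := by
  simp only [isBlue, badSet, filter_eq_empty_iff, not_not]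
  intro t _
  have h := mul_cN_le_vpos_mul hr hn t
  zify at h
  rw [cN_cast hr (by omega), cN_cast hr (by omega)] at h
  simp only [slopeLE, vx, vpos_zero hr hn, Nat.add_sub_cancel, show n + 1 - 2 = n - 1 by omega]
  push_cast
  linarith

end DyckPath

section Components

variable {V : Finset ℕ} {e g i k : ℕ}

-- `(i, k)` encodes the maximal interval `(i, k] = [e, compEnd V e]` of `V`, i.e. the subpath
-- `α(i,k)`.
noncomputable def components (V : Finset ℕ) : Finset (ℕ × ℕ) :=
  (starts V).image fun e => (e - 1, compEnd V e)

-- The intervals `(p.1, p.2]` and `(q.1, q.2]` are disjoint and not adjacent.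
def Apart (p q : ℕ × ℕ) : Prop := p.2 < q.1 ∨ q.2 < p.1

lemma bddAbove_Icc_subset (V : Finset ℕ) (e : ℕ) : BddAbove {g | Icc e g ⊆ V} :=
  ⟨e + #V, fun g hg => by have := card_le_card (s := Icc e g) hg; simp at this; omega⟩

lemma le_compEnd (h : Icc e g ⊆ V) : g ≤ compEnd V e :=
  le_csSup (bddAbove_Icc_subset V e) h

lemma self_le_compEnd (he : e ∈ V) : e ≤ compEnd V e :=
  le_compEnd (by simpa using he)

lemma Icc_compEnd_subset (he : e ∈ V) : Icc e (compEnd V e) ⊆ V :=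
  Nat.sSup_mem ⟨e, by simpa using he⟩ (bddAbove_Icc_subset V e)

lemma compEnd_add_one_notMem (he : e ∈ V) : compEnd V e + 1 ∉ V := fun h => by
  have hle : e ≤ compEnd V e + 1 := (self_le_compEnd he).trans (Nat.le_succ _)
  have := le_compEnd <|
    insert_Icc_right_eq_Icc_add_one hle ▸ insert_subset h (Icc_compEnd_subset he)
  omega

lemma mem_components :
    (i, k) ∈ components V ↔ i < k ∧ Ioc i k ⊆ V ∧ i ∉ V ∧ k + 1 ∉ V := by
  constructor
  · simp only [components, mem_image, Prod.mk.injEq]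
    rintro ⟨e, he, rfl, rfl⟩
    obtain ⟨heV, hprev⟩ : e ∈ V ∧ e - 1 ∉ V := by simpa [starts] using he
    obtain ⟨e, rfl⟩ :=
      Nat.exists_eq_add_one_of_ne_zero (n := e) (by rintro rfl; exact hprev heV)
    refine ⟨by simpa using self_le_compEnd heV, ?_, hprev, compEnd_add_one_notMem heV⟩
    simpa [← Icc_add_one_left_eq_Ioc] using Icc_compEnd_subset heV
  · rintro ⟨hik, hsub, hi, hk⟩
    rw [← Icc_add_one_left_eq_Ioc] at hsub
    have hiV : i + 1 ∈ V := hsub (mem_Icc.2 ⟨le_rfl, hik⟩)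
    have hend : compEnd V (i + 1) = k := by
      refine le_antisymm ?_ (le_compEnd hsub)
      by_contra! hlt
      exact hk (Icc_compEnd_subset hiV (mem_Icc.2 ⟨by omega, hlt⟩))
    exact mem_image.2 ⟨i + 1, by simpa [starts] using ⟨hiV, hi⟩, by simp [hend]⟩

lemma components_pairwise_apart (V : Finset ℕ) :
    (components V : Set (ℕ × ℕ)).Pairwise Apart := by
  rintro ⟨i, k⟩ hp ⟨i', k'⟩ hq hne
  obtain ⟨hik, hsub, hi, hk⟩ := mem_components.1 hp
  obtain ⟨hik', hsub', hi', hk'⟩ := mem_components.1 hq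
  by_contra! h
  simp only [Apart, not_or, not_lt] at h
  rcases lt_trichotomy i i' with hlt | rfl | hlt
  · exact hi' (hsub (mem_Ioc.2 ⟨hlt, h.1⟩))
  · rcases lt_trichotomy k k' with hlt | rfl | hlt
    · exact hk (hsub' (mem_Ioc.2 ⟨by omega, hlt⟩))
    · exact hne rfl
    · exact hk' (hsub (mem_Ioc.2 ⟨by omega, hlt⟩))
  · exact hi (hsub' (mem_Ioc.2 ⟨hlt, h.2⟩))

lemma biUnion_components (h0 : 0 ∉ V) :
    (components V).biUnion (fun p => Ioc p.1 p.2) = V := by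
  ext x
  simp only [mem_biUnion, Prod.exists]
  constructor
  · rintro ⟨i, k, hp, hx⟩
    exact (mem_components.1 hp).2.1 hx
  · intro hx
    set i := Nat.findGreatest (· ∉ V) x
    have hi : i ∉ V := Nat.findGreatest_spec (P := (· ∉ V)) (Nat.zero_le x) h0
    have hix : i < x := lt_of_le_of_ne (Nat.findGreatest_le x) fun h => hi (h ▸ hx)
    have hIcc : Icc (i + 1) x ⊆ V := fun y hy => by
      by_contra hyV
      have := Nat.le_findGreatest (P := (· ∉ V)) (mem_Icc.1 hy).2 hyV
      simp only [mem_Icc] at hy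
      omega
    have hiV : i + 1 ∈ V := hIcc (mem_Icc.2 ⟨le_rfl, hix⟩)
    have hxk : x ≤ compEnd V (i + 1) := le_compEnd hIcc
    refine ⟨i, compEnd V (i + 1),
      mem_components.2 ⟨by omega, ?_, hi, compEnd_add_one_notMem hiV⟩, mem_Ioc.2 ⟨hix, hxk⟩⟩
    simpa [← Icc_add_one_left_eq_Ioc] using Icc_compEnd_subset hiV

lemma disjoint_Ioc_of_apart {p q : ℕ × ℕ} (h : Apart p q) :
    Disjoint (Ioc p.1 p.2) (Ioc q.1 q.2) := by
  rw [disjoint_left]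
  intro x hx hx'
  simp only [mem_Ioc] at hx hx'
  rcases h with h | h <;> omega

lemma card_eq_sum_components (h0 : 0 ∉ V) : #V = ∑ p ∈ components V, (p.2 - p.1) := by
  conv_lhs => rw [← biUnion_components h0]
  rw [card_biUnion fun p hp q hq hne =>
    disjoint_Ioc_of_apart (components_pairwise_apart V hp hq hne)]
  simp

lemma components_biUnion {P : Finset (ℕ × ℕ)} (hP : (P : Set (ℕ × ℕ)).Pairwise Apart)
    (hlt : ∀ p ∈ P, p.1 < p.2) : components (P.biUnion fun p => Ioc p.1 p.2) = P := by
  set U := P.biUnion fun p => Ioc p.1 p.2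
  have mem_U {x : ℕ} : x ∈ U ↔ ∃ q ∈ P, q.1 < x ∧ x ≤ q.2 := by simp [U]
  have hends : ∀ p ∈ P, p.1 ∉ U ∧ p.2 + 1 ∉ U := by
    intro p hp
    have := hlt p hp
    constructor <;> intro hU <;> obtain ⟨q, hq, hx⟩ := mem_U.1 hU <;>
      rcases eq_or_ne p q with rfl | hne <;>
      first | omega | rcases hP hp hq hne with h | h <;> omega
  ext ⟨i, k⟩
  rw [mem_components]
  constructor
  · rintro ⟨hik, hsub, hi, hk⟩
    obtain ⟨⟨i', k'⟩, hp', hi', hk'⟩ := mem_U.1 (hsub (mem_Ioc.2 ⟨i.lt_succ_self, hik⟩))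
    have hii' : i' = i := by
      by_contra hne
      exact hi (mem_U.2 ⟨_, hp', by dsimp at *; omega, by dsimp at *; omega⟩)
    subst hii'
    rcases lt_trichotomy k' k with hlt' | rfl | hlt'
    · exact absurd (hsub (mem_Ioc.2 ⟨by dsimp at *; omega, hlt'⟩)) (hends _ hp').2
    · exact hp'
    · exact absurd (mem_U.2 ⟨_, hp', by omega, hlt'⟩) hk
  · intro hp
    exact ⟨hlt _ hp, fun x hx => mem_U.2 ⟨_, hp, mem_Ioc.1 hx⟩, hends _ hp⟩

end Components

section Collections

variable {r n i k : ℕ} {V E : Finset ℕ}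

lemma Ioc_vpos_subset_edges (i k : ℕ) :
    Ioc (vpos r n i) (vpos r n k) ⊆ edges r n (.inr (i, k)) := by
  simp only [edges]
  split_ifs
  · exact Ioc_subset_Icc_self
  · rw [Icc_add_one_left_eq_Ioc]

lemma edges_subset_Icc_vpos (i k : ℕ) :
    edges r n (.inr (i, k)) ⊆ Icc (vpos r n i) (vpos r n k) := by
  simp only [edges]
  split_ifs
  · exact Subset.rfl
  · rw [Icc_add_one_left_eq_Ioc]
    exact Ioc_subset_Icc_self

lemma disjoint_edges_of_apart (hr : 2 ≤ r) (hn : 3 ≤ n) {p q : ℕ × ℕ} (h : Apart p q) :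
    Disjoint (edges r (n + 1) (.inr p)) (edges r (n + 1) (.inr q)) := by
  have hmono := vpos_strictMono hr hn
  refine disjoint_of_subset_left (edges_subset_Icc_vpos _ _)
    (disjoint_of_subset_right (edges_subset_Icc_vpos _ _) (disjoint_left.2 fun x hx hx' => ?_))
  simp only [mem_Icc] at hx hx'
  rcases h with h | h
  · have := hmono h; omega
  · have := hmono h; omega

lemma apart_of_disjoint_edges (hr : 2 ≤ r) (hn : 3 ≤ n) {p q : ℕ × ℕ} (hp : p.1 < p.2)
    (hq : q.1 < q.2) (hpq : p.1 ≠ q.2) (hqp : q.1 ≠ p.2)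
    (hd : Disjoint (edges r (n + 1) (.inr p)) (edges r (n + 1) (.inr q))) : Apart p q := by
  by_contra! h
  simp only [Apart, not_or, not_lt] at h
  have hmono := vpos_strictMono hr hn
  have mem_edges {s : ℕ × ℕ} (hs : s.1 < max p.1 q.1 + 1) (hs' : max p.1 q.1 + 1 ≤ s.2) :
      vpos r (n + 1) (max p.1 q.1 + 1) ∈ edges r (n + 1) (.inr s) :=
    Ioc_vpos_subset_edges _ _ (mem_Ioc.2 ⟨hmono hs, hmono.monotone hs'⟩)
  exact disjoint_left.1 hd (mem_edges (by omega) (by omega)) (mem_edges (by omega) (by omega))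

lemma isBGinterval_vpos_iff (hr : 2 ≤ r) (hn : 3 ≤ n) (hik : i < k) (hk : k ≤ cN r (n - 1)) :
    isBGinterval r n (vpos r (n + 1) i + 1) (vpos r (n + 1) k) ↔ ¬ isRed r (n + 1) i k := by
  have hmono := vpos_strictMono hr hn
  constructor
  · rintro ⟨i', k', -, -, hred, hIcc⟩
    obtain ⟨hi, hk⟩ :=
      (Set.Icc_eq_Icc_iff (hmono hik)).1 (by simpa using congrArg SetLike.coe hIcc)
    rwa [hmono.injective (Nat.succ_injective hi), hmono.injective hk]
  · intro hred
    refine ⟨i, k, hik, ?_, hred, rfl⟩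
    rw [← cN_cast hr (by omega)]
    exact_mod_cast hk

lemma components_bounds {C : ℕ} (hV : V ⊆ Icc 1 C) {p : ℕ × ℕ} (hp : p ∈ components V) :
    p.1 < p.2 ∧ p.2 ≤ C := by
  obtain ⟨hlt, hsub, -⟩ := mem_components.1 hp
  exact ⟨hlt, (mem_Icc.1 (hV (hsub (right_mem_Ioc.2 hlt)))).2⟩

lemma fmap_eq_biUnion_edges (hr : 2 ≤ r) (hn : 3 ≤ n) (hV : V ⊆ Icc 1 (cN r (n - 1))) :
    fmap r n V = (components V).biUnion fun p => edges r (n + 1) (.inr p) := by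
  rw [fmap, components, image_biUnion]
  refine biUnion_congr rfl fun e he => ?_
  obtain ⟨hlt, hle⟩ :=
    components_bounds hV (mem_image_of_mem (fun e => (e - 1, compEnd V e)) he)
  have hmono := vpos_strictMono hr hn
  simp only [fcomp, S_eq_vpos hr hn, isBGinterval_vpos_iff hr hn hlt hle, edges]
  split_ifs
  · exact insert_Icc_add_one_left_eq_Icc (hmono hlt).le
  · rfl

lemma edges_subset_Icc (hr : 2 ≤ r) (hn : 3 ≤ n) (hk : k ≤ cN r (n - 1)) :
    edges r (n + 1) (.inr (i, k)) ⊆ Icc 1 (cN r n) := by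
  have hmono := vpos_strictMono hr hn
  intro x hx
  refine mem_Icc.2
    ⟨?_, (mem_Icc.1 (edges_subset_Icc_vpos i k hx)).2.trans (vpos_le_cN hr hn hk)⟩
  simp only [edges] at hx
  split_ifs at hx with hred
  · have hi : 0 < i := Nat.pos_of_ne_zero fun h => hred.1 (h ▸ isBlue_zero hr hn k)
    have := hmono hi
    rw [vpos_zero hr hn] at this
    exact this.trans_le (mem_Icc.1 hx).1
  · exact (Nat.le_add_left 1 _).trans (mem_Icc.1 hx).1

lemma fmap_subset_Icc (hr : 2 ≤ r) (hn : 3 ≤ n) (hV : V ⊆ Icc 1 (cN r (n - 1))) :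
    fmap r n V ⊆ Icc 1 (cN r n) := by
  rw [fmap_eq_biUnion_edges hr hn hV]
  exact biUnion_subset.2 fun p hp => edges_subset_Icc hr hn (components_bounds hV hp).2

end Collections

section Bijection

variable {r n : ℕ} {V E : Finset ℕ}

lemma validColl_disjSum_components (hr : 2 ≤ r) (hn : 3 ≤ n) (hV : V ⊆ Icc 1 (cN r (n - 1)))
    (hE : E ⊆ Icc 1 (cN r n) \ fmap r n V) : validColl r (n + 1) (E.disjSum (components V)) := by
  have hE_fmap {j : ℕ} (hj : j ∈ E) {q : ℕ × ℕ} (hq : q ∈ components V) :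
      j ∉ edges r (n + 1) (.inr q) := fun h => (mem_sdiff.1 (hE hj)).2 <| by
    rw [fmap_eq_biUnion_edges hr hn hV]
    exact mem_biUnion.2 ⟨q, hq, h⟩
  refine ⟨?_, ?_, ?_⟩
  · rintro (j | p) hp <;> simp only [inl_mem_disjSum, inr_mem_disjSum] at hp
    · obtain ⟨hj1, hjn⟩ := mem_Icc.1 (mem_sdiff.1 (hE hp)).1
      refine ⟨hj1, ?_⟩
      rw [Nat.add_sub_cancel, ← cN_cast hr (by omega)]
      exact_mod_cast hjn
    · obtain ⟨hlt, hle⟩ := components_bounds hV hp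
      refine ⟨hlt, ?_⟩
      rw [show n + 1 - 2 = n - 1 by omega, ← cN_cast hr (by omega)]
      exact_mod_cast hle
  · rintro (j | p) hp (j' | q) hq hne <;>
      simp only [inl_mem_disjSum, inr_mem_disjSum] at hp hq
    · simpa [edges] using hne
    · simpa [edges] using hE_fmap hp hq
    · simpa [edges] using hE_fmap hq hp
    · exact disjoint_edges_of_apart hr hn
        (components_pairwise_apart V hp hq fun h => hne (congrArg _ h))
  · intro i k i' k' hp hq
    simp only [inr_mem_disjSum] at hp hq
    have := (mem_components.1 hp).1
    have := (mem_components.1 hq).1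
    by_cases heq : (i, k) = (i', k')
    · simp only [Prod.mk.injEq] at heq; omega
    · rcases components_pairwise_apart V hp hq heq with h | h <;> dsimp at h <;> omega

lemma exists_eq_disjSum_components (hr : 2 ≤ r) (hn : 3 ≤ n) {β : Finset Elt}
    (hβ : validColl r (n + 1) β) :
    ∃ V ⊆ Icc 1 (cN r (n - 1)), ∃ E ⊆ Icc 1 (cN r n) \ fmap r n V,
      E.disjSum (components V) = β := by
  obtain ⟨hvalid, hdisj, hends⟩ := hβ
  have hlt (p : ℕ × ℕ) (hp : p ∈ β.toRight) : p.1 < p.2 := (hvalid _ (mem_toRight.1 hp)).1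
  have hapart : (β.toRight : Set (ℕ × ℕ)).Pairwise Apart := fun p hp q hq hne => by
    rw [mem_coe, mem_toRight] at hp hq
    exact apart_of_disjoint_edges hr hn (hvalid _ hp).1 (hvalid _ hq).1 (hends _ _ _ _ hp hq).1
      (hends _ _ _ _ hp hq).2 (hdisj _ hp _ hq fun h => hne (Sum.inr_injective h))
  set V := β.toRight.biUnion fun p => Ioc p.1 p.2
  have hcomp : components V = β.toRight := components_biUnion hapart hlt
  have hV : V ⊆ Icc 1 (cN r (n - 1)) := by
    intro x hx
    obtain ⟨p, hp, hx⟩ := mem_biUnion.1 hx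
    have hk := (hvalid _ (mem_toRight.1 hp)).2
    rw [show n + 1 - 2 = n - 1 by omega, ← cN_cast hr (by omega)] at hk
    simp only [mem_Ioc] at hx
    exact mem_Icc.2 ⟨by omega, by omega⟩
  refine ⟨V, hV, β.toLeft, fun j hj => ?_, by rw [hcomp, toLeft_disjSum_toRight]⟩
  rw [mem_toLeft] at hj
  obtain ⟨hj1, hjn⟩ := hvalid _ hj
  rw [Nat.add_sub_cancel, ← cN_cast hr (by omega)] at hjn
  refine mem_sdiff.2 ⟨mem_Icc.2 ⟨hj1, by omega⟩, fun hjf => ?_⟩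
  rw [fmap_eq_biUnion_edges hr hn hV, hcomp] at hjf
  obtain ⟨q, hq, hjq⟩ := mem_biUnion.1 hjf
  exact disjoint_left.1 (hdisj _ hj _ (mem_toRight.1 hq) Sum.inl_ne_inr) (mem_singleton_self j) hjq

end Bijection

section Sum

variable {r n : ℕ} {V E : Finset ℕ}

lemma B1_disjSum_components (hV : 0 ∉ V) (E : Finset ℕ) :
    B1 (E.disjSum (components V)) = #V := by
  simp [B1, sum_disjSum, wt1, card_eq_sum_components hV]

lemma B2_disjSum_components (hr : 2 ≤ r) (hn : 3 ≤ n) (hV : V ⊆ Icc 1 (cN r (n - 1)))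
    (hE : E ⊆ Icc 1 (cN r n) \ fmap r n V) :
    B2 r (n + 1) (E.disjSum (components V)) = #(fmap r n V) + #E := by
  have hunion : (E.disjSum (components V)).biUnion (edges r (n + 1)) = fmap r n V ∪ E := by
    ext x
    simp [fmap_eq_biUnion_edges hr hn hV, edges, or_comm]
  rw [B2, hunion, card_union_of_disjoint (disjoint_right.2 fun _ hj => (mem_sdiff.1 (hE hj)).2)]

lemma Ftilde_succ_eq_image (hr : 2 ≤ r) (hn : 3 ≤ n) :
    Ftilde r (n + 1) = ↑(((Icc 1 (cN r (n - 1))).powerset.sigma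
      fun V => (Icc 1 (cN r n) \ fmap r n V).powerset).image
        fun σ => σ.2.disjSum (components σ.1)) := by
  ext β
  simp only [Ftilde, Set.mem_ofPred_eq, coe_image, Set.mem_image, mem_coe, mem_sigma, mem_powerset,
    Sigma.exists]
  constructor
  · intro hβ
    obtain ⟨V, hV, E, hE, rfl⟩ := exists_eq_disjSum_components hr hn hβ
    exact ⟨V, E, ⟨hV, hE⟩, rfl⟩
  · rintro ⟨V, E, ⟨hV, hE⟩, rfl⟩
    exact validColl_disjSum_components hr hn hV hE

lemma finsum_Ftilde_succ {M : Type*} [AddCommMonoid M] (hr : 2 ≤ r) (hn : 3 ≤ n)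
    (g : ℕ → ℕ → M) :
    ∑ᶠ β ∈ Ftilde r (n + 1), g (B1 β) (B2 r (n + 1) β) =
      ∑ V ∈ (Icc 1 (cN r (n - 1))).powerset, ∑ E ∈ (Icc 1 (cN r n) \ fmap r n V).powerset,
        g #V (#(fmap r n V) + #E) := by
  have h0 {V : Finset ℕ} (hV : V ∈ (Icc 1 (cN r (n - 1))).powerset) : 0 ∉ V :=
    fun h => by simpa using mem_powerset.1 hV h
  rw [Ftilde_succ_eq_image hr hn, finsum_mem_coe_finset, sum_image, sum_sigma]
  · refine sum_congr rfl fun V hV => sum_congr rfl fun E hE => ?_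
    rw [B1_disjSum_components (h0 hV), B2_disjSum_components hr hn (mem_powerset.1 hV)
      (mem_powerset.1 hE)]
  · rintro ⟨V, E⟩ hσ ⟨V', E'⟩ hσ' heq
    simp only [mem_coe, mem_sigma] at hσ hσ'
    obtain ⟨rfl, hcomp⟩ := disjSum_inj.1 heq
    obtain rfl : V = V' := by
      rw [← biUnion_components (h0 hσ.1), ← biUnion_components (h0 hσ'.1), hcomp]
    rfl

end Sum

section Binomial

lemma gbinom_natCast (a b : ℕ) : gbinom a b = a.choose b := by
  rw [gbinom, if_neg (by omega), Int.toNat_natCast]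
  simp only [Int.cast_natCast]
  rw [← descPochhammer_eval_eq_prod_range, descPochhammer_eval_eq_descFactorial,
    Nat.descFactorial_eq_factorial_mul_choose, Nat.cast_mul]
  field_simp

lemma sum_powerset_card_eq_finsum_gbinom {α R : Type*} [DivisionRing R] (s : Finset α)
    (f : ℤ → R) : ∑ t ∈ s.powerset, f #t = ∑ᶠ h : ℤ, (gbinom #s h : R) * f h := by
  rw [sum_powerset_apply_card (fun m => f m),
    finsum_eq_sum_of_support_subset (s := (range (#s + 1)).map Nat.castEmbedding), sum_map]
  · refine sum_congr rfl fun m _ => ?_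
    simp [gbinom_natCast, nsmul_eq_mul]
  · intro h hh
    have h0 : 0 ≤ h := by
      by_contra hneg
      exact hh (by simp [gbinom, not_le.1 hneg])
    lift h to ℕ using h0
    have hle : h ≤ #s := by
      by_contra hlt
      exact hh (by simp [gbinom_natCast, Nat.choose_eq_zero_of_lt (not_le.1 hlt)])
    simpa [Nat.lt_succ_iff] using hle

end Binomial

theorem z_succ_formula (r : ℕ) (hr : 2 ≤ r) (n : ℕ) (hn : 4 ≤ n) :
    zF r (n + 1) = x₁ ^ (-(c r n)) * x₂ ^ (-(c r (n - 1))) *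
      ∑ V ∈ (Finset.Icc 1 (cN r (n - 1))).powerset,
        ∑ᶠ h : ℤ,
          ((gbinom (c r n - ((fmap r n V).card : ℤ)) h : ℚ) : K) *
            x₁ ^ ((r : ℤ) * (V.card : ℤ)) *
            x₂ ^ ((r : ℤ) * (c r n - ((fmap r n V).card : ℤ) - h)) := by
  have hn3 : 3 ≤ n := by omega
  rw [zF, Nat.add_sub_cancel, show n + 1 - 2 = n - 1 by omega,
    finsum_Ftilde_succ hr hn3 fun b₁ b₂ =>
      x₁ ^ ((r : ℤ) * b₁) * x₂ ^ ((r : ℤ) * (c r n - b₂))]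
  refine congrArg _ (sum_congr rfl fun V hV => ?_)
  have hcard : (#(Icc 1 (cN r n) \ fmap r n V) : ℤ) = c r n - #(fmap r n V) := by
    rw [card_sdiff_of_subset (fmap_subset_Icc hr hn3 (mem_powerset.1 hV)), Nat.card_Icc,
      Nat.add_sub_cancel, Nat.cast_sub, cN_cast hr (by omega)]
    simpa using card_le_card (fmap_subset_Icc hr hn3 (mem_powerset.1 hV))
  rw [← hcard]
  simp_rw [mul_assoc]
  rw [← sum_powerset_card_eq_finsum_gbinom]
  refine sum_congr rfl fun E _ => ?_
  rw [hcard]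
  push_cast
  ring_nf

end CF
end
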